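/- Let r ≥ 4 and t ≥ 2r be integers and let G be an r-graph on vertex set [t]. Let x = (x_1,…,x_t) be an optimal weighting for G with x_1 ≥ x_2 ≥ ⋯ ≥ x_t ≥ 0. Then either x_1 < 2(x_{t−2r+4} + x_{t−2r+5}), or λ(G) ≤ (1/r!)·(t−r)^{r−1}·(∏_{i=t−r+2}^{t−2} i) / ((t−r+1)^{r−2}·(t−1)^{r−2}), and this quantity is strictly less than (1/r!)·(∏_{i=t−r}^{t−1} i)/(t−1)^r = λ([t−1]^{(r)}). -/

import Mathlib

/-- `lagEval E x` is λ(G,x): the sum over the edges of `E` of the product of the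
weights (under `x`) of their vertices. -/
def lagEval (E : Finset (Finset ℕ)) (x : ℕ → ℝ) : ℝ :=
  ∑ e ∈ E, ∏ i ∈ e, x i

/-- A feasible weighting: nonnegative entries, finitely supported, total weight 1. -/
def Feasible (x : ℕ → ℝ) : Prop :=
  (∀ i, 0 ≤ x i) ∧ ∃ S : Finset ℕ, (∀ i ∉ S, x i = 0) ∧ ∑ i ∈ S, x i = 1

/-- A feasible weighting on the vertex set [n] = {1,…,n}. -/
def FeasibleOn (n : ℕ) (x : ℕ → ℝ) : Prop :=
  (∀ i, 0 ≤ x i) ∧ (∀ i ∉ Finset.Icc 1 n, x i = 0) ∧ ∑ i ∈ Finset.Icc 1 n, x i = 1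

/-- The Lagrangian λ(G) of a hypergraph with edge set `E`: the supremum (in fact
maximum) of λ(G,x) over all feasible weightings `x`. -/
noncomputable def lagrangian (E : Finset (Finset ℕ)) : ℝ :=
  sSup {y : ℝ | ∃ x : ℕ → ℝ, Feasible x ∧ lagEval E x = y}

/-- `completeG s r` is [s]^{(r)}, the complete r-graph on {1,…,s}. -/
def completeG (s r : ℕ) : Finset (Finset ℕ) :=
  (Finset.Icc 1 s).powersetCard r

/-- `E` is (the edge set of) an r-graph on the vertex set [n] = {1,…,n}. -/
def IsRGraphOn (r n : ℕ) (E : Finset (Finset ℕ)) : Prop :=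
  ∀ e ∈ E, e.card = r ∧ e ⊆ Finset.Icc 1 n

/-- The r-graph `E` contains a clique of order `s` (inside the vertex set `V`):
some `s`-element subset of `V` has all of its `r`-element subsets as edges. -/
def ContainsCliqueOn (V : Finset ℕ) (r s : ℕ) (E : Finset (Finset ℕ)) : Prop :=
  ∃ S : Finset ℕ, S ⊆ V ∧ S.card = s ∧ S.powersetCard r ⊆ E

/-- `DomLE A B`: `A` and `B` have the same size and, listing both in increasing
order as `i_1 < ⋯ < i_r` and `j_1 < ⋯ < j_r`, one has `i_k ≤ j_k` for all `k`
(equivalently, for every threshold `c`, `A` has at most as many elements above `c`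
as `B`). -/
def DomLE (A B : Finset ℕ) : Prop :=
  A.card = B.card ∧
    ∀ c : ℕ, (A.filter fun a => c < a).card ≤ (B.filter fun b => c < b).card

/-- `E` is left-compressed: together with any edge it contains every set of positive
integers dominating it from the left. -/
def LeftCompressed (E : Finset (Finset ℕ)) : Prop :=
  ∀ B ∈ E, ∀ A : Finset ℕ, (∀ a ∈ A, 1 ≤ a) → DomLE A B → A ∈ E

/-- `nbhd E i` is E_i, the (r-1)-neighborhood of the vertex `i`:
all sets `A` with `i ∉ A` and `A ∪ {i} ∈ E`. -/
def nbhd (E : Finset (Finset ℕ)) (i : ℕ) : Finset (Finset ℕ) :=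
  (E.filter fun e => i ∈ e).image fun e => e.erase i

/-- `nbhd2 E i j` is E_{ij}, the (r-2)-neighborhood of the pair of vertices `i, j`. -/
def nbhd2 (E : Finset (Finset ℕ)) (i j : ℕ) : Finset (Finset ℕ) :=
  (E.filter fun e => i ∈ e ∧ j ∈ e).image fun e => (e.erase i).erase j

/-- `C` consists of the first `m` r-element subsets of {1,2,3,…} in the colex
ordering: it has `m` edges, all of them r-element sets of positive integers, and it
is an initial segment for the colex order. -/
def IsColexSegment (r m : ℕ) (C : Finset (Finset ℕ)) : Prop :=
  C.card = m ∧ (∀ e ∈ C, e.card = r ∧ ∀ a ∈ e, 1 ≤ a) ∧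
    ∀ A B : Finset ℕ, A.card = r → (∀ a ∈ A, 1 ≤ a) → B ∈ C →
      toColex A < toColex B → A ∈ C

open Finset

/-!
At an optimal weighting the partial derivatives `λ(G_j, x) = ∂λ/∂x_j` are maximal at every
vertex of positive weight: moving weight `δ` from `i` to `j` changes `λ` by
`δ (λ(G_j, x) - λ(G_i, x)) - δ² λ(G_ij, x)`. Euler's identity `r λ(G, x) = ∑ x_j λ(G_j, x)`
then gives `r λ(G) ≤ λ(G_1, x)`, and since the link `G_1` lives on the other `t - 1` vertices,
of total weight `1 - x_1`, Maclaurin's inequality bounds it by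
`C(t-1, r-1) ((1 - x_1)/(t - 1))^(r-1)`. If `x_1 ≥ 2 (x_{t-2r+4} + x_{t-2r+5})`, monotonicity
of `x` forces `x_1 ≥ 1/(t - r + 1)`, which turns this into the stated bound. Bernoulli's
inequality compares it with `λ([t-1]^(r)) = C(t-1, r)/(t-1)^r`, the latter again by Maclaurin.
-/

-- After multiplication by `k + 1` this is the tangent-line inequality for `v ↦ v ^ (k + 1)` at `u`.
lemma maclaurin_step {n k : ℕ} {u v : ℝ} (hu : 0 ≤ u) (hv : 0 ≤ v) :
    (n.choose (k + 1) : ℝ) * u ^ (k + 1) +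
        ((n + 1) * v - n * u) * ((n.choose k : ℝ) * u ^ k) ≤
      ((n + 1).choose (k + 1) : ℝ) * v ^ (k + 1) := by
  have tangent : u ^ (k + 1) + (k + 1 : ℕ) * u ^ k * (v - u) ≤ v ^ (k + 1) := by
    simpa using pow_add_mul_le_add_pow hu (by linarith : 0 ≤ 2 * u + (v - u)) (k + 1)
  have h1 : (n.choose (k + 1) : ℝ) * (k + 1) + k * n.choose k = n * n.choose k := by
    rcases le_or_gt k n with hkn | hkn
    · have := congrArg (Nat.cast (R := ℝ)) (Nat.choose_succ_right_eq n k)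
      push_cast [Nat.cast_sub hkn] at this
      linear_combination this
    · simp [Nat.choose_eq_zero_of_lt hkn, Nat.choose_eq_zero_of_lt (Nat.lt_succ_of_lt hkn)]
  have h2 : ((n + 1).choose (k + 1) : ℝ) * (k + 1) = (n + 1) * n.choose k := by
    exact_mod_cast (Nat.add_one_mul_choose_eq n k).symm
  have := mul_le_mul_of_nonneg_left tangent (by positivity : (0:ℝ) ≤ (n + 1) * n.choose k)
  push_cast at this
  rw [← mul_le_mul_iff_of_pos_left (by positivity : (0:ℝ) < k + 1)]
  linear_combination this + u ^ (k + 1) * h1 - v ^ (k + 1) * h2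

lemma lagEval_powersetCard_succ_insert {Y : Finset ℕ} {a : ℕ} (ha : a ∉ Y) (k : ℕ)
    (y : ℕ → ℝ) :
    lagEval ((insert a Y).powersetCard (k + 1)) y =
      lagEval (Y.powersetCard (k + 1)) y + y a * lagEval (Y.powersetCard k) y := by
  have hdisj : Disjoint (Y.powersetCard (k + 1)) ((Y.powersetCard k).image (insert a)) := by
    refine disjoint_left.2 fun A hA hA' => ?_
    obtain ⟨B, -, rfl⟩ := mem_image.1 hA'
    exact ha ((mem_powersetCard.1 hA).1 (mem_insert_self a B))
  have hinj : Set.InjOn (insert a) (Y.powersetCard k : Set (Finset ℕ)) := fun B hB C hC h => by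
    have haB : a ∉ B := fun h' => ha ((mem_powersetCard.1 hB).1 h')
    have haC : a ∉ C := fun h' => ha ((mem_powersetCard.1 hC).1 h')
    rw [← erase_insert haB, ← erase_insert haC, h]
  unfold lagEval
  rw [powersetCard_succ_insert ha, sum_union hdisj, sum_image hinj, mul_sum]
  congr 1
  refine sum_congr rfl fun B hB => prod_insert fun h' => ha ((mem_powersetCard.1 hB).1 h')

-- Maclaurin's inequality.
theorem lagEval_powersetCard_le (Y : Finset ℕ) (k : ℕ) {y : ℕ → ℝ}
    (hy : ∀ i ∈ Y, 0 ≤ y i) :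
    lagEval (Y.powersetCard k) y ≤
      (Y.card.choose k : ℝ) * ((∑ i ∈ Y, y i) / Y.card) ^ k := by
  induction Y using Finset.induction_on generalizing k with
  | empty =>
    rcases k with _ | k
    · simp [lagEval]
    · simp [lagEval, powersetCard_eq_empty.2 (by simp : (∅ : Finset ℕ).card < k + 1)]
  | insert a Y ha ih =>
    rcases k with _ | k
    · simp [lagEval]
    have hy' : ∀ i ∈ Y, 0 ≤ y i := fun i hi => hy i (mem_insert_of_mem hi)
    set n := Y.card
    set S := ∑ i ∈ Y, y i
    have hS : (n : ℝ) * (S / n) = S := by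
      rcases eq_or_ne n 0 with hn | hn
      · simp [S, card_eq_zero.1 hn]
      · field_simp
    rw [lagEval_powersetCard_succ_insert ha, card_insert_of_notMem ha, sum_insert ha]
    have hS0 : 0 ≤ S := sum_nonneg hy'
    have hya : ((n : ℝ) + 1) * ((y a + S) / (n + 1 : ℕ)) - n * (S / n) = y a := by
      rw [hS]; push_cast; field_simp; ring
    calc _ ≤ (n.choose (k + 1) : ℝ) * (S / n) ^ (k + 1) +
            y a * ((n.choose k : ℝ) * (S / n) ^ k) :=
          add_le_add (ih (k + 1) hy')
            (mul_le_mul_of_nonneg_left (ih k hy') (hy a (mem_insert_self a Y)))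
      _ = (n.choose (k + 1) : ℝ) * (S / n) ^ (k + 1) +
            ((n + 1) * ((y a + S) / (n + 1 : ℕ)) - n * (S / n)) *
              ((n.choose k : ℝ) * (S / n) ^ k) := by
        rw [hya]
      _ ≤ _ := maclaurin_step (by positivity) (by have := hy a (mem_insert_self a Y); positivity)

lemma lagEval_nonneg (E : Finset (Finset ℕ)) {x : ℕ → ℝ} (hx : ∀ i, 0 ≤ x i) :
    0 ≤ lagEval E x :=
  sum_nonneg fun _ _ => prod_nonneg fun i _ => hx i

lemma lagEval_mono {E F : Finset (Finset ℕ)} (h : E ⊆ F) {x : ℕ → ℝ}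
    (hx : ∀ i, 0 ≤ x i) :
    lagEval E x ≤ lagEval F x :=
  sum_le_sum_of_subset_of_nonneg h fun _ _ _ => prod_nonneg fun i _ => hx i

lemma FeasibleOn.feasible {n : ℕ} {x : ℕ → ℝ} (hx : FeasibleOn n x) : Feasible x :=
  ⟨hx.1, Icc 1 n, hx.2⟩

namespace Feasible

variable {x : ℕ → ℝ}

lemma sum_le_one (hx : Feasible x) (T : Finset ℕ) : ∑ i ∈ T, x i ≤ 1 := by
  obtain ⟨hx0, S, hS, hS1⟩ := hx
  calc ∑ i ∈ T, x i ≤ ∑ i ∈ T ∪ S, x i :=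
        sum_le_sum_of_subset_of_nonneg subset_union_left fun i _ _ => hx0 i
    _ = ∑ i ∈ S, x i := (sum_subset subset_union_right fun i _ hi => hS i hi).symm
    _ = 1 := hS1

lemma le_one (hx : Feasible x) (i : ℕ) : x i ≤ 1 := by
  simpa using hx.sum_le_one {i}

end Feasible

lemma lagEval_le_card (E : Finset (Finset ℕ)) {x : ℕ → ℝ} (hx : Feasible x) :
    lagEval E x ≤ E.card := by
  calc lagEval E x ≤ ∑ _e ∈ E, (1 : ℝ) :=
        sum_le_sum fun e _ => prod_le_one (fun i _ => hx.1 i) fun i _ => hx.le_one i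
    _ = E.card := by simp

lemma le_lagrangian (E : Finset (Finset ℕ)) {x : ℕ → ℝ} (hx : Feasible x) :
    lagEval E x ≤ lagrangian E :=
  le_csSup ⟨E.card, by rintro _ ⟨y, hy, rfl⟩; exact lagEval_le_card E hy⟩ ⟨x, hx, rfl⟩

noncomputable def uniformWeight (m : ℕ) (i : ℕ) : ℝ :=
  if i ∈ Icc 1 m then (m : ℝ)⁻¹ else 0

lemma uniformWeight_of_mem {m i : ℕ} (hi : i ∈ Icc 1 m) : uniformWeight m i = (m : ℝ)⁻¹ :=
  if_pos hi

lemma feasible_uniformWeight {m : ℕ} (hm : 1 ≤ m) : Feasible (uniformWeight m) := by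
  refine ⟨fun i => by unfold uniformWeight; positivity, Icc 1 m,
    fun i hi => if_neg hi, ?_⟩
  rw [sum_congr rfl fun i hi => uniformWeight_of_mem hi, sum_const, Nat.card_Icc, nsmul_eq_mul,
    Nat.add_sub_cancel, mul_inv_cancel₀ (by positivity)]

theorem lagrangian_completeG {m : ℕ} (hm : 1 ≤ m) (r : ℕ) :
    lagrangian (completeG m r) = (m.choose r : ℝ) / (m : ℝ) ^ r := by
  have hcard : (Icc 1 m).card = m := by simp
  apply le_antisymm
  · refine csSup_le ⟨_, _, feasible_uniformWeight hm, rfl⟩ ?_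
    rintro _ ⟨x, hx, rfl⟩
    calc lagEval (completeG m r) x
        ≤ (m.choose r : ℝ) * ((∑ i ∈ Icc 1 m, x i) / m) ^ r := by
          simpa [completeG, hcard] using lagEval_powersetCard_le (Icc 1 m) r fun i _ => hx.1 i
      _ ≤ (m.choose r : ℝ) * (1 / m) ^ r := by
          gcongr
          · exact div_nonneg (sum_nonneg fun i _ => hx.1 i) m.cast_nonneg
          · exact hx.sum_le_one _
      _ = _ := by rw [one_div, inv_pow, div_eq_mul_inv]
  · calc (m.choose r : ℝ) / (m : ℝ) ^ r = lagEval (completeG m r) (uniformWeight m) := by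
          rw [lagEval, completeG, sum_congr rfl fun A hA => ?_, sum_const, card_powersetCard,
            hcard, nsmul_eq_mul, div_eq_mul_inv, ← inv_pow]
          rw [mem_powersetCard] at hA
          rw [prod_congr rfl fun i hi => uniformWeight_of_mem (hA.1 hi), prod_const, hA.2]
      _ ≤ lagrangian (completeG m r) := le_lagrangian _ (feasible_uniformWeight hm)

lemma lagEval_nbhd (E : Finset (Finset ℕ)) (x : ℕ → ℝ) (j : ℕ) :
    lagEval (nbhd E j) x = ∑ e ∈ E with j ∈ e, ∏ k ∈ e.erase j, x k := by
  refine sum_image fun e he e' he' h => erase_injOn' j ?_ ?_ h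
  · exact (mem_filter.1 he).2
  · exact (mem_filter.1 he').2

lemma lagEval_nbhd2 (E : Finset (Finset ℕ)) (x : ℕ → ℝ) {i j : ℕ} (hij : i ≠ j) :
    lagEval (nbhd2 E i j) x =
      ∑ e ∈ E with i ∈ e ∧ j ∈ e, ∏ k ∈ (e.erase i).erase j, x k := by
  have hrec : ∀ e : Finset ℕ, i ∈ e → j ∈ e →
      insert i (insert j ((e.erase i).erase j)) = e :=
    fun e hi hj => by rw [insert_erase (mem_erase.2 ⟨hij.symm, hj⟩), insert_erase hi]
  refine sum_image fun e he e' he' h => ?_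
  obtain ⟨-, hie, hje⟩ := mem_filter.1 he
  obtain ⟨-, hie', hje'⟩ := mem_filter.1 he'
  rw [← hrec e hie hje, ← hrec e' hie' hje', h]

theorem sum_mul_lagEval_nbhd {r n : ℕ} {E : Finset (Finset ℕ)} (hE : IsRGraphOn r n E)
    (x : ℕ → ℝ) :
    ∑ i ∈ Icc 1 n, x i * lagEval (nbhd E i) x = r * lagEval E x := by
  have hterm : ∀ i e, x i * (if i ∈ e then ∏ k ∈ e.erase i, x k else 0) =
      if i ∈ e then ∏ k ∈ e, x k else 0 := fun i e => by
    split_ifs with hi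
    · exact mul_prod_erase e x hi
    · exact mul_zero _
  simp_rw [lagEval_nbhd, sum_filter, mul_sum, hterm]
  rw [sum_comm, lagEval, mul_sum]
  refine sum_congr rfl fun e he => ?_
  rw [sum_ite_mem, inter_eq_right.2 (hE e he).2, sum_const, (hE e he).1, nsmul_eq_mul]

noncomputable def transferWeight (x : ℕ → ℝ) (i j : ℕ) (δ : ℝ) : ℕ → ℝ :=
  Function.update (Function.update x i (x i - δ)) j (x j + δ)

lemma prod_transferWeight {i j : ℕ} (hij : i ≠ j) (x : ℕ → ℝ) (δ : ℝ) (e : Finset ℕ) :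
    ∏ k ∈ e, transferWeight x i j δ k =
      ∏ k ∈ e, x k + δ * (if j ∈ e then ∏ k ∈ e.erase j, x k else 0)
        - δ * (if i ∈ e then ∏ k ∈ e.erase i, x k else 0)
        - δ ^ 2 * (if i ∈ e ∧ j ∈ e then ∏ k ∈ (e.erase i).erase j, x k else 0) := by
  rw [transferWeight]
  by_cases hi : i ∈ e <;> by_cases hj : j ∈ e
  · have hj' : j ∈ e.erase i := mem_erase.2 ⟨hij.symm, hj⟩
    simp only [hi, hj, and_self, if_true, prod_update_of_mem hj, sdiff_singleton_eq_erase,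
      prod_update_of_mem (mem_erase.2 ⟨hij, hi⟩)]
    rw [← mul_prod_erase e x hi, ← mul_prod_erase _ x hj', erase_right_comm (s := e),
      ← mul_prod_erase (e.erase j) x (mem_erase.2 ⟨hij, hi⟩), erase_right_comm (s := e)]
    ring
  · simp only [hi, hj, and_false, if_true, if_false, prod_update_of_notMem hj,
      prod_update_of_mem hi, sdiff_singleton_eq_erase]
    rw [← mul_prod_erase e x hi]
    ring
  · have hi' : i ∉ e.erase j := fun h => hi (mem_of_mem_erase h)
    simp only [hi, hj, false_and, if_true, if_false, prod_update_of_mem hj,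
      sdiff_singleton_eq_erase, prod_update_of_notMem hi']
    rw [← mul_prod_erase e x hj]
    ring
  · simp [hi, hj, prod_update_of_notMem]

lemma lagEval_transferWeight (E : Finset (Finset ℕ)) {i j : ℕ} (hij : i ≠ j) (x : ℕ → ℝ)
    (δ : ℝ) :
    lagEval E (transferWeight x i j δ) =
      lagEval E x + δ * lagEval (nbhd E j) x - δ * lagEval (nbhd E i) x
        - δ ^ 2 * lagEval (nbhd2 E i j) x := by
  rw [lagEval_nbhd, lagEval_nbhd, lagEval_nbhd2 E x hij]
  simp only [lagEval, prod_transferWeight hij, sum_add_distrib, sum_sub_distrib, ← mul_sum,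
    sum_filter]

lemma feasible_transferWeight {x : ℕ → ℝ} (hx : Feasible x) {i j : ℕ} (hij : i ≠ j) {δ : ℝ}
    (hδ : 0 ≤ δ) (hδi : δ ≤ x i) :
    Feasible (transferWeight x i j δ) := by
  rw [transferWeight]
  obtain ⟨hx0, S, hS, hS1⟩ := hx
  refine ⟨fun k => ?_, insert i (insert j S), fun k hk => ?_, ?_⟩
  · simp only [Function.update_apply]
    split_ifs <;> linarith [hx0 k, hx0 i, hx0 j]
  · simp only [mem_insert, not_or] at hk
    rw [Function.update_of_ne hk.2.1, Function.update_of_ne hk.1, hS k hk.2.2]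
  · have hjT : j ∈ insert i (insert j S) := mem_insert_of_mem (mem_insert_self j S)
    have hiT : i ∈ insert i (insert j S) \ {j} := by simp [hij]
    have hxT : ∑ k ∈ insert i (insert j S), x k = 1 := by
      rw [← hS1]
      exact (sum_subset (fun k hk => mem_insert_of_mem (mem_insert_of_mem hk))
        fun k _ hk => hS k hk).symm
    rw [sum_update_of_mem hjT, sum_update_of_mem hiT, ← hxT,
      sum_eq_add_sum_sdiff_singleton_of_mem hjT, sum_eq_add_sum_sdiff_singleton_of_mem hiT]
    ring

theorem lagEval_nbhd_le_of_optimal {E : Finset (Finset ℕ)} {x : ℕ → ℝ} (hx : Feasible x)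
    (hopt : lagEval E x = lagrangian E) {i : ℕ} (hi : 0 < x i) (j : ℕ) :
    lagEval (nbhd E j) x ≤ lagEval (nbhd E i) x := by
  rcases eq_or_ne i j with rfl | hij
  · exact le_rfl
  set P := lagEval (nbhd2 E i j) x
  have hP : 0 ≤ P := lagEval_nonneg _ hx.1
  have key : ∀ δ, 0 < δ → δ ≤ x i →
      lagEval (nbhd E j) x ≤ lagEval (nbhd E i) x + P * δ := by
    intro δ hδ hδi
    have := le_lagrangian E (feasible_transferWeight hx hij hδ.le hδi)
    rw [lagEval_transferWeight E hij, ← hopt] at this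
    nlinarith
  refine le_of_forall_pos_le_add fun ε hε => ?_
  calc lagEval (nbhd E j) x ≤ lagEval (nbhd E i) x + P * min (x i) (ε / (P + 1)) :=
        key _ (lt_min hi (by positivity)) (min_le_left _ _)
    _ ≤ lagEval (nbhd E i) x + P * (ε / (P + 1)) := by gcongr; exact min_le_right _ _
    _ ≤ lagEval (nbhd E i) x + ε := by
        gcongr
        rw [mul_div_assoc', div_le_iff₀ (by positivity)]
        nlinarith

theorem mul_lagEval_le_lagEval_nbhd {r n : ℕ} {E : Finset (Finset ℕ)} (hE : IsRGraphOn r n E)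
    {x : ℕ → ℝ} (hx : FeasibleOn n x) (hopt : lagEval E x = lagrangian E) {i : ℕ}
    (hi : 0 < x i) :
    r * lagEval E x ≤ lagEval (nbhd E i) x := by
  rw [← sum_mul_lagEval_nbhd hE]
  calc ∑ k ∈ Icc 1 n, x k * lagEval (nbhd E k) x
      ≤ ∑ k ∈ Icc 1 n, x k * lagEval (nbhd E i) x := sum_le_sum fun k _ =>
        mul_le_mul_of_nonneg_left (lagEval_nbhd_le_of_optimal hx.feasible hopt hi k) (hx.1 k)
    _ = lagEval (nbhd E i) x := by rw [← sum_mul, hx.2.2, one_mul]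

lemma nbhd_subset_powersetCard {r n : ℕ} {E : Finset (Finset ℕ)} (hE : IsRGraphOn r n E)
    (i : ℕ) : nbhd E i ⊆ ((Icc 1 n).erase i).powersetCard (r - 1) := by
  intro A hA
  obtain ⟨e, he, rfl⟩ := mem_image.1 hA
  obtain ⟨heE, hie⟩ := mem_filter.1 he
  rw [mem_powersetCard, card_erase_of_mem hie, (hE e heE).1]
  exact ⟨erase_subset_erase i (hE e heE).2, rfl⟩

theorem mul_lagrangian_le {r n : ℕ} {E : Finset (Finset ℕ)} (hE : IsRGraphOn r n E)
    {x : ℕ → ℝ} (hx : FeasibleOn n x) (hopt : lagEval E x = lagrangian E) {i : ℕ}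
    (hi : 0 < x i) :
    r * lagrangian E ≤
      ((n - 1).choose (r - 1) : ℝ) * ((1 - x i) / ((n : ℝ) - 1)) ^ (r - 1) := by
  have hiV : i ∈ Icc 1 n := by
    by_contra h
    exact hi.ne' (hx.2.1 i h)
  have hcard : ((Icc 1 n).erase i).card = n - 1 := by rw [card_erase_of_mem hiV]; simp
  have hsum : ∑ k ∈ (Icc 1 n).erase i, x k = 1 - x i := by rw [sum_erase_eq_sub hiV, hx.2.2]
  have hn : ((n - 1 : ℕ) : ℝ) = n - 1 := by
    rw [Nat.cast_sub ((mem_Icc.1 hiV).1.trans (mem_Icc.1 hiV).2), Nat.cast_one]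
  calc r * lagrangian E = r * lagEval E x := by rw [hopt]
    _ ≤ lagEval (nbhd E i) x := mul_lagEval_le_lagEval_nbhd hE hx hopt hi
    _ ≤ lagEval (((Icc 1 n).erase i).powersetCard (r - 1)) x :=
        lagEval_mono (nbhd_subset_powersetCard hE i) hx.1
    _ ≤ _ := by
        simpa only [hcard, hsum, hn] using
          lagEval_powersetCard_le ((Icc 1 n).erase i) (r - 1) fun k _ => hx.1 k

lemma sum_Icc_le_of_antitone {t s : ℕ} (hs : 1 ≤ s) (hst : s < t) {x : ℕ → ℝ}
    (hmono : ∀ i j : ℕ, 1 ≤ i → i ≤ j → j ≤ t → x j ≤ x i) :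
    ∑ i ∈ Icc 1 t, x i ≤ (s - 1 : ℕ) * x 1 + x s + (t - s : ℕ) * x (s + 1) := by
  rw [← Ico_add_one_right_eq_Icc, ← sum_Ico_consecutive _ hs (by omega : s ≤ t + 1),
    sum_eq_sum_Ico_succ_bot (by omega : s < t + 1)]
  have hhead : ∑ i ∈ Ico 1 s, x i ≤ (s - 1 : ℕ) * x 1 := by
    simpa using sum_le_card_nsmul (Ico 1 s) x (x 1) fun i hi =>
      hmono 1 i le_rfl (mem_Ico.1 hi).1 (by have := (mem_Ico.1 hi).2; omega)
  have htail : ∑ i ∈ Ico (s + 1) (t + 1), x i ≤ (t - s : ℕ) * x (s + 1) := by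
    simpa using sum_le_card_nsmul (Ico (s + 1) (t + 1)) x (x (s + 1)) fun i hi =>
      hmono (s + 1) i (by omega) (mem_Ico.1 hi).1 (by have := (mem_Ico.1 hi).2; omega)
  linarith

theorem one_le_mul_of_two_mul_le {r t : ℕ} (hr : 3 ≤ r) (ht : 2 * r ≤ t) {x : ℕ → ℝ}
    (hx : FeasibleOn t x) (hmono : ∀ i j : ℕ, 1 ≤ i → i ≤ j → j ≤ t → x j ≤ x i)
    (h : 2 * (x (t - 2 * r + 4) + x (t - 2 * r + 5)) ≤ x 1) :
    1 ≤ ((t : ℝ) - r + 1) * x 1 := by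
  set s := t - 2 * r + 4
  have hsum := sum_Icc_le_of_antitone (by omega : 1 ≤ s) (by omega : s < t) hmono
  rw [hx.2.2, show (s - 1 : ℕ) = t - 2 * r + 3 by omega, show t - s = 2 * r - 4 by omega] at hsum
  push_cast [show 2 * r ≤ t by omega, show 4 ≤ 2 * r by omega] at hsum
  have hmid : x (s + 1) ≤ x s := hmono s (s + 1) (by omega) (by omega) (by omega)
  have hr' : (3 : ℝ) ≤ r := by exact_mod_cast hr
  nlinarith [hx.1 1]

lemma descFactorial_eq_prod_Icc (m k : ℕ) :
    (m + k).descFactorial k = ∏ i ∈ Icc (m + 1) (m + k), i := by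
  induction k with
  | zero => simp
  | succ k ih =>
    rw [← add_assoc, Nat.succ_descFactorial_succ, ih, prod_Icc_succ_top (by omega), mul_comm]

lemma choose_mul_factorial_eq_prod_Icc {n k : ℕ} (h : k ≤ n) :
    (n.choose k : ℝ) * k.factorial = ∏ i ∈ Icc (n + 1 - k) n, (i : ℝ) := by
  obtain ⟨m, rfl⟩ := Nat.exists_eq_add_of_le' h
  rw [show m + k + 1 - k = m + 1 by omega, ← Nat.cast_prod, ← descFactorial_eq_prod_Icc,
    Nat.descFactorial_eq_factorial_mul_choose]
  push_cast
  ring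

lemma prod_Icc_eq_mul_prod_mul {r t : ℕ} (hr : 3 ≤ r) (hrt : r < t) :
    ∏ i ∈ Icc (t - r + 1) (t - 1), (i : ℝ) =
      ((t : ℝ) - r + 1) * (∏ i ∈ Icc (t - r + 2) (t - 2), (i : ℝ)) * ((t : ℝ) - 1) := by
  rw [← mul_prod_Ioc_eq_prod_Icc (by omega), ← Icc_add_one_left_eq_Ioc,
    show t - 1 = t - 2 + 1 by omega, prod_Icc_succ_top (by omega),
    show t - r + 1 + 1 = t - r + 2 by omega]
  push_cast [show r ≤ t by omega, show 2 ≤ t by omega]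
  ring

lemma pow_mul_add_lt_pow_succ {g : ℝ} (hg : 0 < g) {n : ℕ} (hn : 1 ≤ n) :
    g ^ n * (g + n + 1) < (g + 1) ^ (n + 1) := by
  induction n, hn using Nat.le_induction with
  | base => push_cast; nlinarith
  | succ n _ ih =>
    push_cast
    rw [pow_succ, pow_succ (g + 1)]
    nlinarith [pow_pos hg n]

theorem choose_mul_pow_div_eq {r t : ℕ} (hr : 3 ≤ r) (hrt : r < t) :
    ((t - 1).choose (r - 1) : ℝ) *
        (((t : ℝ) - r) / (((t : ℝ) - r + 1) * ((t : ℝ) - 1))) ^ (r - 1) / r =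
      1 / (r.factorial : ℝ) * ((t : ℝ) - r) ^ (r - 1) *
        (∏ i ∈ Icc (t - r + 2) (t - 2), (i : ℝ)) /
        (((t : ℝ) - r + 1) ^ (r - 2) * ((t : ℝ) - 1) ^ (r - 2)) := by
  have hC := choose_mul_factorial_eq_prod_Icc (show r - 1 ≤ t - 1 by omega)
  rw [show t - 1 + 1 - (r - 1) = t - r + 1 by omega, prod_Icc_eq_mul_prod_mul hr hrt] at hC
  obtain ⟨k, rfl⟩ : ∃ k, r = k + 2 := ⟨r - 2, by omega⟩
  have hrt' : ((k + 2 : ℕ) : ℝ) < t := by exact_mod_cast hrt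
  have hg : (0 : ℝ) < t - (k + 2 : ℕ) := by linarith
  have hT : (0 : ℝ) < t - 1 := by push_cast at hrt'; linarith
  simp only [Nat.add_sub_cancel, show k + 2 - 1 = k + 1 by omega] at hC ⊢
  rw [Nat.factorial_succ, div_pow, mul_pow, pow_succ ((t : ℝ) - (k + 2 : ℕ) + 1),
    pow_succ ((t : ℝ) - 1)]
  field_simp
  push_cast at hC ⊢
  linear_combination ((k : ℝ) + 2) * hC

theorem bound_lt_prod_div_pow {r t : ℕ} (hr : 3 ≤ r) (hrt : r < t) :
    1 / (r.factorial : ℝ) * ((t : ℝ) - r) ^ (r - 1) *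
        (∏ i ∈ Icc (t - r + 2) (t - 2), (i : ℝ)) /
        (((t : ℝ) - r + 1) ^ (r - 2) * ((t : ℝ) - 1) ^ (r - 2)) <
      1 / (r.factorial : ℝ) * (∏ i ∈ Icc (t - r) (t - 1), (i : ℝ)) /
        ((t : ℝ) - 1) ^ r := by
  rw [← mul_prod_Ioc_eq_prod_Icc (a := t - r) (b := t - 1) (by omega),
    ← Icc_add_one_left_eq_Ioc, prod_Icc_eq_mul_prod_mul hr hrt, Nat.cast_sub hrt.le]
  set P := ∏ i ∈ Icc (t - r + 2) (t - 2), (i : ℝ)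
  have hP : 0 < P := prod_pos fun i hi => by
    have : 0 < i := lt_of_lt_of_le (by omega) (mem_Icc.1 hi).1
    positivity
  obtain ⟨k, rfl⟩ : ∃ k, r = k + 2 := ⟨r - 2, by omega⟩
  set g : ℝ := t - (k + 2 : ℕ)
  have hg : 0 < g := by
    have : ((k + 2 : ℕ) : ℝ) < t := by exact_mod_cast hrt
    simp only [g]
    linarith
  have hT : (t : ℝ) - 1 = g + k + 1 := by simp only [g]; push_cast; ring
  simp only [show k + 2 - 1 = k + 1 by omega, Nat.add_sub_cancel]
  rw [hT, div_lt_div_iff₀ (by positivity) (by positivity)]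
  have hc : 0 < P * g * (g + k + 1) ^ (k + 1) / ((k + 2).factorial : ℝ) := by positivity
  calc 1 / ((k + 2).factorial : ℝ) * g ^ (k + 1) * P * (g + k + 1) ^ (k + 2)
      = P * g * (g + k + 1) ^ (k + 1) / ((k + 2).factorial : ℝ) * (g ^ k * (g + k + 1)) := by
        ring
    _ < P * g * (g + k + 1) ^ (k + 1) / ((k + 2).factorial : ℝ) * (g + 1) ^ (k + 1) :=
        mul_lt_mul_of_pos_left (pow_mul_add_lt_pow_succ hg (by omega)) hc
    _ = _ := by ring

theorem prod_div_pow_eq_lagrangian_completeG {r t : ℕ} (hr : 1 ≤ r) (hrt : r < t) :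
    1 / (r.factorial : ℝ) * (∏ i ∈ Icc (t - r) (t - 1), (i : ℝ)) / ((t : ℝ) - 1) ^ r =
      lagrangian (completeG (t - 1) r) := by
  have h := choose_mul_factorial_eq_prod_Icc (show r ≤ t - 1 by omega)
  rw [show t - 1 + 1 - r = t - r by omega] at h
  rw [lagrangian_completeG (by omega), ← h, Nat.cast_sub (by omega : 1 ≤ t), Nat.cast_one]
  field_simp

/-- Lemma 2.6(b): for an r-graph `G` on `[t]` (`r ≥ 4`, `t ≥ 2r`) with an optimal
weighting `x` satisfying `x_1 ≥ ⋯ ≥ x_t ≥ 0`, either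
`x_1 < 2(x_{t−2r+4} + x_{t−2r+5})`, or λ(G) is at most the stated bound, which is
strictly smaller than `(1/r!)·(∏_{i=t−r}^{t−1} i)/(t−1)^r = λ([t−1]^{(r)})`. -/
theorem stmt13 (r t : ℕ) (hr : 4 ≤ r) (ht : 2 * r ≤ t)
    (E : Finset (Finset ℕ)) (hE : IsRGraphOn r t E)
    (x : ℕ → ℝ) (hfeas : FeasibleOn t x) (hopt : lagEval E x = lagrangian E)
    (hmono : ∀ i j : ℕ, 1 ≤ i → i ≤ j → j ≤ t → x j ≤ x i) :
    x 1 < 2 * (x (t - 2 * r + 4) + x (t - 2 * r + 5)) ∨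
      (lagrangian E ≤
          1 / (r.factorial : ℝ) * ((t : ℝ) - r) ^ (r - 1) *
            (∏ i ∈ Finset.Icc (t - r + 2) (t - 2), (i : ℝ)) /
            (((t : ℝ) - r + 1) ^ (r - 2) * ((t : ℝ) - 1) ^ (r - 2)) ∧
        1 / (r.factorial : ℝ) * ((t : ℝ) - r) ^ (r - 1) *
            (∏ i ∈ Finset.Icc (t - r + 2) (t - 2), (i : ℝ)) /
            (((t : ℝ) - r + 1) ^ (r - 2) * ((t : ℝ) - 1) ^ (r - 2)) <
          1 / (r.factorial : ℝ) * (∏ i ∈ Finset.Icc (t - r) (t - 1), (i : ℝ)) /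
            ((t : ℝ) - 1) ^ r ∧
        1 / (r.factorial : ℝ) * (∏ i ∈ Finset.Icc (t - r) (t - 1), (i : ℝ)) /
            ((t : ℝ) - 1) ^ r = lagrangian (completeG (t - 1) r)) := by
  refine or_iff_not_imp_left.2 fun hsmall => ⟨?_, bound_lt_prod_div_pow (by omega) (by omega),
    prod_div_pow_eq_lagrangian_completeG (by omega) (by omega)⟩
  have hx1 := one_le_mul_of_two_mul_le (by omega) ht hfeas hmono (not_lt.1 hsmall)
  have hrt : (r : ℝ) + 1 < t := by exact_mod_cast (by omega : r + 1 < t)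
  have hpos : 0 < x 1 := by nlinarith [hfeas.1 1]
  have hbound := mul_lagrangian_le hE hfeas hopt hpos
  rw [← choose_mul_pow_div_eq (by omega) (by omega), ← div_div]
  calc lagrangian E
        ≤ ((t - 1).choose (r - 1) : ℝ) * ((1 - x 1) / ((t : ℝ) - 1)) ^ (r - 1) / r := by
        rw [le_div_iff₀ (by positivity)]
        linarith
    _ ≤ _ := by
        have hx1le := hfeas.feasible.le_one 1
        gcongr
        · exact div_nonneg (by linarith) (by linarith)
        · linarith
        · rw [le_div_iff₀ (by linarith)]
          linarith
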